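/- For n ≥ 3, the monoid DPC_n of all partial isometries of the cycle graph C_n is generated by the three elements g, h, e_n, where g is the n-cycle i ↦ i+1 (mod n), h is the reversal i ↦ n-i+1, and e_n is the identity map restricted to {1,...,n-1}. -/

import Mathlib

/-- Geodesic distance on the cycle graph `C_n` with vertices `{1,...,n}`:
`d(x,y) = min (|x-y|, n-|x-y|)`. -/
def cdist (n x y : ℕ) : ℕ := min ((x : ℤ) - y).natAbs (n - ((x : ℤ) - y).natAbs)

/-- The n-cycle permutation `g` of `{1,...,n}`: `i ↦ i+1 (mod n)`. -/
def gfun (n i : ℕ) : ℕ := if i < n then i + 1 else 1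

/-- The reversal permutation `h` of `{1,...,n}`: `i ↦ n-i+1`. -/
def hfun (n i : ℕ) : ℕ := n - i + 1

/-- Left-to-right composition of partial maps (apply `f`, then `g`). -/
def pcomp (f g : ℕ → Option ℕ) : ℕ → Option ℕ := fun x => (f x).bind g

/-- The partial identity on `{1,...,n}`. -/
def pid (n : ℕ) : ℕ → Option ℕ := fun i => if i ∈ Finset.Icc 1 n then some i else none

/-- `g` as a partial map with domain `{1,...,n}`. -/
def gmap (n : ℕ) : ℕ → Option ℕ := fun i => if i ∈ Finset.Icc 1 n then some (gfun n i) else none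

/-- `h` as a partial map with domain `{1,...,n}`. -/
def hmap (n : ℕ) : ℕ → Option ℕ := fun i => if i ∈ Finset.Icc 1 n then some (hfun n i) else none

/-- `e_j`: the partial identity with domain `{1,...,n} \ {j}`. -/
def emap (n j : ℕ) : ℕ → Option ℕ := fun i => if i ∈ Finset.Icc 1 n ∧ i ≠ j then some i else none

/-- `k`-th power of a partial map (with identity `pid n`). -/
def ppow (n : ℕ) (f : ℕ → Option ℕ) : ℕ → (ℕ → Option ℕ)
  | 0 => pid n
  | k + 1 => pcomp f (ppow n f k)

/-- `f` is a partial isometry of the cycle graph `C_n`: a partial injective map on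
`{1,...,n}` preserving the cycle distance. -/
def PIso (n : ℕ) (f : ℕ → Option ℕ) : Prop :=
  (∀ x y, f x = some y → x ∈ Finset.Icc 1 n ∧ y ∈ Finset.Icc 1 n) ∧
  (∀ x y z, f x = some z → f y = some z → x = y) ∧
  (∀ x y x' y', f x = some x' → f y = some y' → cdist n x' y' = cdist n x y)

/-- Domain of a partial map, as a set. -/
def DomS (f : ℕ → Option ℕ) : Set ℕ := {x | (f x).isSome}

/-- Image of a partial map, as a set. -/
def ImS (f : ℕ → Option ℕ) : Set ℕ := {y | ∃ x, f x = some y}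

/-- Domain of a partial map on `{1,...,n}`, as a finset. -/
def domF (n : ℕ) (f : ℕ → Option ℕ) : Finset ℕ :=
  (Finset.Icc 1 n).filter (fun x => (f x).isSome)

/-- The dihedral group `D_{2n}` as the set of the permutations `g^k` and `h·g^k`
(acting on the right, so `h·g^k` applies `h` first) of `{1,...,n}`, `0 ≤ k ≤ n-1`. -/
def Dih (n : ℕ) : Set (ℕ → ℕ) :=
  {σ | ∃ k < n, σ = (gfun n)^[k] ∨ σ = fun i => (gfun n)^[k] (hfun n i)}

/-- `σ` extends the partial map `f`. -/
def Extends (σ : ℕ → ℕ) (f : ℕ → Option ℕ) : Prop := ∀ x y, f x = some y → σ x = y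

/-!
Identify `{1,...,n}` with `ZMod n`. Then `d(x,y)` is the absolute value of the minimal residue of
`x - y`, so a partial isometry `f` satisfies `f x - f y = ±(x - y)` on its domain. Comparing the
signs at three points shows that a single sign works for all pairs through a fixed point, so `f` is
the restriction of a translation `x ↦ x + c` (some `g^k`) or of a reflection `x ↦ c - x` (some
`h g^k`). Hence `f` is the partial identity on its domain followed by a word in `g` and `h`, and
that partial identity is a product of the `e_j = g^(n-j) e_n g^j`.
-/

open Finset

section ZModCoordinates

variable {n : ℕ} [NeZero n]

lemma natCast_injOn_Icc : Set.InjOn (Nat.cast : ℕ → ZMod n) (Icc 1 n) := by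
  intro x hx y hy hxy
  simp only [coe_Icc, Set.mem_Icc] at hx hy
  rw [ZMod.natCast_eq_natCast_iff'] at hxy
  rcases hx.2.eq_or_lt with rfl | hx' <;> rcases hy.2.eq_or_lt with rfl | hy'
  · rfl
  · rw [Nat.mod_self, Nat.mod_eq_of_lt hy'] at hxy; omega
  · rw [Nat.mod_self, Nat.mod_eq_of_lt hx'] at hxy; omega
  · rwa [Nat.mod_eq_of_lt hx', Nat.mod_eq_of_lt hy'] at hxy

lemma natAbs_valMinAbs_intCast {d : ℤ} (hd : d.natAbs < n) :
    (d : ZMod n).valMinAbs.natAbs = min d.natAbs (n - d.natAbs) := by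
  obtain ⟨m, rfl | rfl⟩ := Int.eq_nat_or_neg d
  all_goals
    simp only [Int.natAbs_neg, Int.natAbs_natCast, Int.cast_neg, Int.cast_natCast,
      ZMod.natAbs_valMinAbs_neg] at hd ⊢
    rw [ZMod.valMinAbs_natAbs_eq_min, ZMod.val_natCast_of_lt hd]

lemma cdist_eq_natAbs_valMinAbs {x y : ℕ} (hx : x ∈ Icc 1 n) (hy : y ∈ Icc 1 n) :
    cdist n x y = ((x : ZMod n) - y).valMinAbs.natAbs := by
  rw [mem_Icc] at hx hy
  have hcast : (x : ZMod n) - y = (((x : ℤ) - y : ℤ) : ZMod n) := by push_cast; rfl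
  rw [hcast, natAbs_valMinAbs_intCast (by omega), cdist]

lemma cdist_eq_cdist_iff {x y x' y' : ℕ} (hx : x ∈ Icc 1 n) (hy : y ∈ Icc 1 n)
    (hx' : x' ∈ Icc 1 n) (hy' : y' ∈ Icc 1 n) :
    cdist n x' y' = cdist n x y ↔
      (x' : ZMod n) - y' = x - y ∨ (x' : ZMod n) - y' = -(x - y) := by
  rw [cdist_eq_natAbs_valMinAbs hx hy, cdist_eq_natAbs_valMinAbs hx' hy',
    ZMod.natAbs_valMinAbs_eq_natAbs_valMinAbs]

omit [NeZero n] in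
lemma mapsTo_gfun : Set.MapsTo (gfun n) (Icc 1 n) (Icc 1 n) := by
  intro x hx
  simp only [coe_Icc, Set.mem_Icc] at hx ⊢
  unfold gfun; split <;> omega

lemma natCast_gfun {x : ℕ} (hx : x ∈ Icc 1 n) : (gfun n x : ZMod n) = x + 1 := by
  rw [mem_Icc] at hx
  unfold gfun
  split
  · push_cast; rfl
  · obtain rfl : x = n := by omega
    simp

lemma natCast_iterate_gfun (k : ℕ) {x : ℕ} (hx : x ∈ Icc 1 n) :
    ((gfun n)^[k] x : ZMod n) = x + k := by
  induction k with
  | zero => simp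
  | succ k ih =>
    rw [Function.iterate_succ_apply', natCast_gfun (mapsTo_gfun.iterate k hx), ih]
    push_cast; ring

omit [NeZero n] in
lemma mapsTo_hfun : Set.MapsTo (hfun n) (Icc 1 n) (Icc 1 n) := by
  intro x hx
  simp only [coe_Icc, Set.mem_Icc] at hx ⊢
  unfold hfun; omega

omit [NeZero n] in
lemma natCast_hfun {x : ℕ} (hx : x ∈ Icc 1 n) : (hfun n x : ZMod n) = 1 - x := by
  rw [mem_Icc] at hx
  rw [hfun, Nat.cast_add, Nat.cast_sub hx.2, ZMod.natCast_self, Nat.cast_one]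
  ring

end ZModCoordinates

theorem exists_eq_add_const_or_eq_const_sub {ι R : Type*} [CommRing R] (a b : ι → R)
    (h : ∀ i j, b i - b j = a i - a j ∨ b i - b j = -(a i - a j)) :
    ∃ c, (∀ i, b i = a i + c) ∨ (∀ i, b i = c - a i) := by
  cases isEmpty_or_nonempty ι with
  | inl _ => exact ⟨0, Or.inl isEmptyElim⟩
  | inr hne =>
    obtain ⟨i₀⟩ := hne
    by_cases htrans : ∀ i, b i - b i₀ = a i - a i₀
    · exact ⟨b i₀ - a i₀, Or.inl fun i => by linear_combination htrans i⟩
    push Not at htrans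
    obtain ⟨j, hj⟩ := htrans
    have hj' : b j - b i₀ = -(a j - a i₀) := (h j i₀).resolve_left hj
    refine ⟨b i₀ + a i₀, Or.inr fun i => ?_⟩
    rcases h i i₀ with hi | hi
    · rcases h i j with hij | hij
      · exact absurd (by linear_combination hi - hij) hj
      · linear_combination hij + hj'
    · linear_combination hi

def onIcc (n : ℕ) (σ : ℕ → ℕ) : ℕ → Option ℕ :=
  fun i => if i ∈ Icc 1 n then some (σ i) else none

def pidOn (s : Finset ℕ) : ℕ → Option ℕ := fun i => if i ∈ s then some i else none

section PartialMaps

variable {n : ℕ}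

lemma pid_eq_pidOn : pid n = pidOn (Icc 1 n) := rfl

lemma emap_eq_pidOn (j : ℕ) : emap n j = pidOn ((Icc 1 n).erase j) := by
  funext i
  simp only [emap, pidOn, mem_erase, and_comm]

lemma PIso.mem_Icc {f : ℕ → Option ℕ} (hf : PIso n f) {x y : ℕ} (h : f x = some y) :
    x ∈ Icc 1 n ∧ y ∈ Icc 1 n :=
  hf.1 x y h

lemma PIso.eq_none {f : ℕ → Option ℕ} (hf : PIso n f) {x : ℕ} (hx : x ∉ Icc 1 n) :
    f x = none :=
  Option.eq_none_iff_forall_ne_some.2 fun _ h => hx (hf.mem_Icc h).1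

lemma pid_pcomp {q : ℕ → Option ℕ} (hq : PIso n q) : pcomp (pid n) q = q := by
  funext x
  by_cases hx : x ∈ Icc 1 n
  · simp [pcomp, pid, hx]
  · simp [pcomp, pid, hx, hq.eq_none hx]

lemma pcomp_pid {p : ℕ → Option ℕ} (hp : PIso n p) : pcomp p (pid n) = p := by
  funext x
  cases hx : p x with
  | none => simp [pcomp, hx]
  | some y => simp [pcomp, pid, hx, (hp.mem_Icc hx).2]

lemma pcomp_assoc (f g h : ℕ → Option ℕ) : pcomp (pcomp f g) h = pcomp f (pcomp g h) := by
  funext x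
  exact Option.bind_assoc (f x) g h

lemma foldr_pcomp_eq_pcomp_foldr {q : ℕ → Option ℕ} (hq : pcomp (pid n) q = q)
    (l : List (ℕ → Option ℕ)) : l.foldr pcomp q = pcomp (l.foldr pcomp (pid n)) q := by
  induction l with
  | nil => exact hq.symm
  | cons p l ih => rw [List.foldr_cons, List.foldr_cons, ih, pcomp_assoc]

lemma onIcc_pcomp_onIcc {σ τ : ℕ → ℕ} (hσ : Set.MapsTo σ (Icc 1 n) (Icc 1 n)) :
    pcomp (onIcc n σ) (onIcc n τ) = onIcc n (τ ∘ σ) := by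
  funext x
  by_cases hx : x ∈ Icc 1 n
  · have hσx : σ x ∈ Icc 1 n := hσ hx
    simp only [pcomp, onIcc, if_pos hx, if_pos hσx, Option.bind_some, Function.comp_apply]
  · simp only [pcomp, onIcc, if_neg hx, Option.bind_none]

lemma pidOn_erase {s : Finset ℕ} (hs : s ⊆ Icc 1 n) (j : ℕ) :
    pidOn (s.erase j) = pcomp (emap n j) (pidOn s) := by
  funext x
  have hxs : x ∈ s → x ∈ Icc 1 n := @hs x
  simp only [pidOn, emap, pcomp, mem_erase]
  split_ifs <;> simp_all [pidOn]

lemma pcomp_emap_pcomp {σ τ : ℕ → ℕ} (hσ : Set.MapsTo σ (Icc 1 n) (Icc 1 n))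
    (hτσ : ∀ x ∈ Icc 1 n, τ (σ x) = x) {j : ℕ} (hj : j ∈ Icc 1 n) :
    pcomp (onIcc n σ) (pcomp (emap n (σ j)) (onIcc n τ)) = emap n j := by
  funext x
  by_cases hx : x ∈ Icc 1 n
  · have hσx : σ x ∈ Icc 1 n := hσ hx
    have hσxj : σ x = σ j → x = j := fun h => by rw [← hτσ x hx, h, hτσ j hj]
    simp only [pcomp, onIcc, if_pos hx, Option.bind_some]
    by_cases hxj : x = j
    · subst hxj
      simp [emap]
    · have hσxj' : σ x ≠ σ j := mt hσxj hxj
      simp only [emap, onIcc, hσx, hx, hxj, hσxj', ne_eq, not_false_eq_true, and_self, if_true,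
        Option.bind_some, hτσ x hx]
  · simp [pcomp, onIcc, emap, hx]

lemma eq_pcomp_pidOn_domF {f : ℕ → Option ℕ} (hf : PIso n f) {σ : ℕ → ℕ}
    (hσ : Extends σ f) :
    f = pcomp (pidOn (domF n f)) (onIcc n σ) := by
  funext x
  cases hx : f x with
  | none => simp [pcomp, pidOn, domF, hx]
  | some y =>
    have hxI := (hf.mem_Icc hx).1
    simp [pcomp, pidOn, domF, onIcc, hx, hxI, hσ x y hx]

end PartialMaps

section PartialIsometries

variable {n : ℕ}

lemma PIso.pcomp {p q : ℕ → Option ℕ} (hp : PIso n p) (hq : PIso n q) :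
    PIso n (pcomp p q) := by
  obtain ⟨p1, p2, p3⟩ := hp
  obtain ⟨q1, q2, q3⟩ := hq
  refine ⟨fun x z hxz => ?_, fun x y z hx hy => ?_, fun x y x' y' hx hy => ?_⟩
  · obtain ⟨m, hm, hmz⟩ := Option.bind_eq_some_iff.1 hxz
    exact ⟨(p1 x m hm).1, (q1 m z hmz).2⟩
  · obtain ⟨m₁, hm₁, hm₁z⟩ := Option.bind_eq_some_iff.1 hx
    obtain ⟨m₂, hm₂, hm₂z⟩ := Option.bind_eq_some_iff.1 hy
    obtain rfl := q2 m₁ m₂ z hm₁z hm₂z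
    exact p2 x y m₁ hm₁ hm₂
  · obtain ⟨m₁, hm₁, hm₁z⟩ := Option.bind_eq_some_iff.1 hx
    obtain ⟨m₂, hm₂, hm₂z⟩ := Option.bind_eq_some_iff.1 hy
    rw [q3 m₁ m₂ x' y' hm₁z hm₂z, p3 x y m₁ m₂ hm₁ hm₂]

lemma pIso_pidOn {s : Finset ℕ} (hs : s ⊆ Icc 1 n) : PIso n (pidOn s) := by
  have hpidOn : ∀ {x y}, pidOn s x = some y → x ∈ s ∧ y = x := fun h => by
    unfold pidOn at h; split_ifs at h with hx
    exact ⟨hx, (Option.some_inj.1 h).symm⟩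
  refine ⟨fun x y h => ?_, fun x y z hx hy => ?_, fun x y x' y' hx hy => ?_⟩
  · obtain ⟨hx, rfl⟩ := hpidOn h
    exact ⟨hs hx, hs hx⟩
  · exact (hpidOn hx).2.symm.trans (hpidOn hy).2
  · rw [(hpidOn hx).2, (hpidOn hy).2]

lemma pIso_onIcc [NeZero n] {σ : ℕ → ℕ} (hσ : Set.MapsTo σ (Icc 1 n) (Icc 1 n))
    (h : ∀ x ∈ Icc 1 n, ∀ y ∈ Icc 1 n,
      (σ x : ZMod n) - σ y = x - y ∨ (σ x : ZMod n) - σ y = -(x - y)) :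
    PIso n (onIcc n σ) := by
  have honIcc : ∀ {x y}, onIcc n σ x = some y → x ∈ Icc 1 n ∧ σ x = y := fun h => by
    unfold onIcc at h; split_ifs at h with hx
    exact ⟨hx, Option.some_inj.1 h⟩
  refine ⟨fun x y hxy => ?_, fun x y z hx hy => ?_, fun x y x' y' hx hy => ?_⟩
  · obtain ⟨hx, rfl⟩ := honIcc hxy
    exact ⟨hx, hσ hx⟩
  · obtain ⟨hxI, rfl⟩ := honIcc hx
    obtain ⟨hyI, hσxy⟩ := honIcc hy
    apply natCast_injOn_Icc hxI hyI
    rw [← sub_eq_zero]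
    rcases h x hxI y hyI with h | h <;> rw [hσxy, sub_self] at h
    exacts [h.symm, neg_eq_zero.1 h.symm]
  · obtain ⟨hxI, rfl⟩ := honIcc hx
    obtain ⟨hyI, rfl⟩ := honIcc hy
    exact (cdist_eq_cdist_iff hxI hyI (hσ hxI) (hσ hyI)).2 (h x hxI y hyI)

lemma pIso_gmap [NeZero n] : PIso n (gmap n) :=
  pIso_onIcc mapsTo_gfun fun x hx y hy => Or.inl <| by
    rw [natCast_gfun hx, natCast_gfun hy]; ring

lemma pIso_hmap [NeZero n] : PIso n (hmap n) :=
  pIso_onIcc mapsTo_hfun fun x hx y hy => Or.inr <| by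
    rw [natCast_hfun hx, natCast_hfun hy]; ring

lemma pIso_emap (j : ℕ) : PIso n (emap n j) :=
  emap_eq_pidOn j ▸ pIso_pidOn (erase_subset j _)

end PartialIsometries

theorem PIso.exists_mem_Dih_extends {n : ℕ} [NeZero n] {f : ℕ → Option ℕ} (hf : PIso n f) :
    ∃ σ ∈ Dih n, Extends σ f := by
  have hdiff : ∀ p q : {p : ℕ × ℕ // f p.1 = some p.2},
      (p.1.2 : ZMod n) - q.1.2 = p.1.1 - q.1.1 ∨ (p.1.2 : ZMod n) - q.1.2 = -(p.1.1 - q.1.1) :=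
    fun p q => (cdist_eq_cdist_iff (hf.mem_Icc p.2).1 (hf.mem_Icc q.2).1
      (hf.mem_Icc p.2).2 (hf.mem_Icc q.2).2).1 (hf.2.2 _ _ _ _ p.2 q.2)
  obtain ⟨c, htrans | hrefl⟩ := exists_eq_add_const_or_eq_const_sub _ _ hdiff
  · refine ⟨(gfun n)^[c.val], ⟨c.val, c.val_lt, Or.inl rfl⟩, fun x y hxy => ?_⟩
    obtain ⟨hx, hy⟩ := hf.mem_Icc hxy
    apply natCast_injOn_Icc (mapsTo_gfun.iterate _ hx) hy
    rw [natCast_iterate_gfun _ hx, ZMod.natCast_zmod_val, htrans ⟨(x, y), hxy⟩]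
  · refine ⟨fun i => (gfun n)^[(c - 1).val] (hfun n i),
      ⟨(c - 1).val, ZMod.val_lt _, Or.inr rfl⟩, fun x y hxy => ?_⟩
    obtain ⟨hx, hy⟩ := hf.mem_Icc hxy
    apply natCast_injOn_Icc (mapsTo_gfun.iterate _ (mapsTo_hfun hx)) hy
    rw [natCast_iterate_gfun _ (mapsTo_hfun hx), natCast_hfun hx, ZMod.natCast_zmod_val,
      hrefl ⟨(x, y), hxy⟩]
    ring

def Generated (n : ℕ) (f : ℕ → Option ℕ) : Prop :=
  ∃ l : List (ℕ → Option ℕ),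
    (∀ p ∈ l, p = gmap n ∨ p = hmap n ∨ p = emap n n) ∧ l.foldr pcomp (pid n) = f

section Generated

variable {n : ℕ}

lemma generated_pid : Generated n (pid n) := ⟨[], by simp, rfl⟩

lemma generated_of_pIso_of_mem {p : ℕ → Option ℕ} (hp : PIso n p)
    (hgen : p = gmap n ∨ p = hmap n ∨ p = emap n n) : Generated n p :=
  ⟨[p], by simpa using hgen, pcomp_pid hp⟩

variable [NeZero n]

lemma Generated.pIso {f : ℕ → Option ℕ} (hf : Generated n f) : PIso n f := by
  obtain ⟨l, hl, rfl⟩ := hf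
  induction l with
  | nil => exact pid_eq_pidOn ▸ pIso_pidOn subset_rfl
  | cons p l ih =>
    refine PIso.pcomp ?_ (ih fun q hq => hl q (List.mem_cons_of_mem p hq))
    rcases hl p List.mem_cons_self with rfl | rfl | rfl
    exacts [pIso_gmap, pIso_hmap, pIso_emap n]

lemma Generated.pcomp {p q : ℕ → Option ℕ} (hp : Generated n p) (hq : Generated n q) :
    Generated n (pcomp p q) := by
  obtain ⟨l₁, hl₁, rfl⟩ := hp
  obtain ⟨l₂, hl₂, rfl⟩ := hq
  refine ⟨l₁ ++ l₂, fun p hp => (List.mem_append.1 hp).elim (hl₁ p) (hl₂ p), ?_⟩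
  rw [List.foldr_append,
    foldr_pcomp_eq_pcomp_foldr (pid_pcomp (Generated.pIso ⟨l₂, hl₂, rfl⟩))]

lemma generated_onIcc_iterate_gfun (k : ℕ) : Generated n (onIcc n (gfun n)^[k]) := by
  induction k with
  | zero => exact generated_pid
  | succ k ih =>
    rw [Function.iterate_succ, ← onIcc_pcomp_onIcc mapsTo_gfun]
    exact (generated_of_pIso_of_mem pIso_gmap (Or.inl rfl)).pcomp ih

lemma generated_onIcc_of_mem_Dih {σ : ℕ → ℕ} (hσ : σ ∈ Dih n) :
    Generated n (onIcc n σ) := by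
  obtain ⟨k, -, rfl | rfl⟩ := hσ
  · exact generated_onIcc_iterate_gfun k
  · rw [show (fun i => (gfun n)^[k] (hfun n i)) = (gfun n)^[k] ∘ hfun n from rfl,
      ← onIcc_pcomp_onIcc mapsTo_hfun]
    exact (generated_of_pIso_of_mem pIso_hmap (Or.inr (Or.inl rfl))).pcomp
      (generated_onIcc_iterate_gfun k)

/-- `g^(n-j)` sends `j` to `n`, so `e_j = g^(n-j) e_n g^j`. -/
lemma generated_emap (j : ℕ) : Generated n (emap n j) := by
  by_cases hj : j ∈ Icc 1 n
  · have hjn : (gfun n)^[n - j] j = n := by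
      have hnI : n ∈ Icc 1 n := by simp [Nat.one_le_iff_ne_zero, NeZero.ne n]
      apply natCast_injOn_Icc (mapsTo_gfun.iterate _ hj) hnI
      rw [natCast_iterate_gfun _ hj, Nat.cast_sub (mem_Icc.1 hj).2]
      ring
    have hinv : ∀ x ∈ Icc 1 n, (gfun n)^[j] ((gfun n)^[n - j] x) = x := fun x hx => by
      apply natCast_injOn_Icc (mapsTo_gfun.iterate _ (mapsTo_gfun.iterate _ hx)) hx
      rw [natCast_iterate_gfun _ (mapsTo_gfun.iterate _ hx), natCast_iterate_gfun _ hx,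
        Nat.cast_sub (mem_Icc.1 hj).2, ZMod.natCast_self]
      ring
    rw [← pcomp_emap_pcomp (mapsTo_gfun.iterate _) hinv hj, hjn]
    exact (generated_onIcc_iterate_gfun _).pcomp
      ((generated_of_pIso_of_mem (pIso_emap n) (Or.inr (Or.inr rfl))).pcomp
        (generated_onIcc_iterate_gfun _))
  · rw [emap_eq_pidOn, erase_eq_of_notMem hj, ← pid_eq_pidOn]
    exact generated_pid

lemma generated_pidOn {s : Finset ℕ} (hs : s ⊆ Icc 1 n) : Generated n (pidOn s) := by
  rw [← Finset.sdiff_sdiff_eq_self hs]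
  induction Icc 1 n \ s using Finset.induction_on with
  | empty => rw [sdiff_empty]; exact generated_pid
  | insert j t _ ih =>
    rw [sdiff_insert, pidOn_erase sdiff_subset]
    exact (generated_emap j).pcomp ih

theorem PIso.generated {f : ℕ → Option ℕ} (hf : PIso n f) : Generated n f := by
  obtain ⟨σ, hσ, hext⟩ := hf.exists_mem_Dih_extends
  rw [eq_pcomp_pidOn_domF hf hext]
  exact (generated_pidOn (filter_subset _ _)).pcomp (generated_onIcc_of_mem_Dih hσ)

end Generated

/-- `DPC_n` is generated (as a monoid of partial maps under left-to-right
composition, with identity `id_{1..n}`) by `g`, `h` and `e_n`. -/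
theorem stmt_14 (n : ℕ) (hn : 3 ≤ n) (f : ℕ → Option ℕ) :
    PIso n f ↔ ∃ l : List (ℕ → Option ℕ),
      (∀ p ∈ l, p = gmap n ∨ p = hmap n ∨ p = emap n n) ∧
      l.foldr pcomp (pid n) = f := by
  have : NeZero n := ⟨by omega⟩
  exact ⟨PIso.generated, Generated.pIso⟩
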